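/- Let ι ∈ ℋ^∞(B_{ℓ₂},ℓ₂) be the identity function ι(x) = x. Then the fiber 𝓕(ι) consists exactly of the composition homomorphism C_ι; that is, every Φ ∈ ℳ_{u,∞}(B_{ℓ₂},B_{ℓ₂}) with ξ(Φ) = ι satisfies Φ(f) = f (as elements of ℋ^∞(B_{ℓ₂})) for every f ∈ 𝒜_u(B_{ℓ₂}). -/

import Mathlib

open Metric Set Filter

noncomputable section

/-- `ℓ2` is the complex Hilbert space of square-summable sequences indexed by `ℕ`. -/
abbrev ℓ2 : Type := lp (fun _ : ℕ => ℂ) 2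

/-- The open unit ball of `ℓ2`. -/
def oB : Set ℓ2 := Metric.ball 0 1

/-- The closed unit ball of `ℓ2`. -/
def cB : Set ℓ2 := Metric.closedBall 0 1

/-- The unit sphere of `ℓ2`. -/
def sph : Set ℓ2 := Metric.sphere 0 1

/-- The coordinate functional `x ↦ ⟨x, eₙ⟩ = xₙ` (inner product linear in the first variable). -/
def coord (n : ℕ) : ℓ2 → ℂ := fun x => x n

/-- Supremum norm on the open unit ball, for scalar-valued functions. -/
def supNorm (f : ℓ2 → ℂ) : ℝ := ⨆ x : oB, ‖f (x : ℓ2)‖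

/-- Supremum norm on the open unit ball, for `ℓ2`-valued functions. -/
def supNormV (g : ℓ2 → ℓ2) : ℝ := ⨆ x : oB, ‖g (x : ℓ2)‖

/-- Membership in `𝒜ᵤ(B)`: holomorphic on the open unit ball and uniformly continuous there. -/
def MemAu (f : ℓ2 → ℂ) : Prop :=
  DifferentiableOn ℂ f oB ∧ UniformContinuousOn f oB

/-- Membership in `ℋ^∞(B)`: holomorphic and bounded on the open unit ball. -/
def MemHinf (f : ℓ2 → ℂ) : Prop :=
  DifferentiableOn ℂ f oB ∧ ∃ C, ∀ x ∈ oB, ‖f x‖ ≤ C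

/-- Membership in `ℋ^∞(B,ℓ2)`: holomorphic and bounded on the open unit ball, `ℓ2`-valued. -/
def MemHinfV (g : ℓ2 → ℓ2) : Prop :=
  DifferentiableOn ℂ g oB ∧ ∃ C, ∀ x ∈ oB, ‖g x‖ ≤ C

/-- `fext` is (a representative of) the unique continuous extension `f̃` of `f` to the
closed unit ball. -/
def IsExt (f fext : ℓ2 → ℂ) : Prop :=
  ContinuousOn fext cB ∧ Set.EqOn fext f oB

/-- An element of the scalar-valued spectrum `ℳᵤ(B)`: a nonzero continuous `ℂ`-algebra
homomorphism `𝒜ᵤ(B) → ℂ`, encoded as a map on representatives. -/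
structure MuHom where
  toFun : (ℓ2 → ℂ) → ℂ
  map_add : ∀ f g, MemAu f → MemAu g → toFun (f + g) = toFun f + toFun g
  map_mul : ∀ f g, MemAu f → MemAu g → toFun (f * g) = toFun f * toFun g
  map_smul : ∀ (c : ℂ) (f), MemAu f → toFun (c • f) = c * toFun f
  respects : ∀ f g, MemAu f → MemAu g → Set.EqOn f g oB → toFun f = toFun g
  nonzero : ∃ f, MemAu f ∧ toFun f ≠ 0
  cont : ∃ C, ∀ f, MemAu f → ‖toFun f‖ ≤ C * supNorm f

/-- An element of the vector-valued spectrum `ℳ_{u,∞}(B,B)`: a nonzero continuous `ℂ`-algebra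
homomorphism `𝒜ᵤ(B) → ℋ^∞(B)`, encoded as a map on representatives. -/
structure MuInfHom where
  toFun : (ℓ2 → ℂ) → (ℓ2 → ℂ)
  maps_mem : ∀ f, MemAu f → MemHinf (toFun f)
  map_add : ∀ f g, MemAu f → MemAu g → ∀ x ∈ oB, toFun (f + g) x = toFun f x + toFun g x
  map_mul : ∀ f g, MemAu f → MemAu g → ∀ x ∈ oB, toFun (f * g) x = toFun f x * toFun g x
  map_smul : ∀ (c : ℂ) (f), MemAu f → ∀ x ∈ oB, toFun (c • f) x = c * toFun f x
  respects : ∀ f g, MemAu f → MemAu g → Set.EqOn f g oB → Set.EqOn (toFun f) (toFun g) oB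
  nonzero : ∃ f, MemAu f ∧ ∃ x ∈ oB, toFun f x ≠ 0
  cont : ∃ C, ∀ f, MemAu f → ∀ x ∈ oB, ‖toFun f x‖ ≤ C * supNorm f

/-- An element of the scalar-valued spectrum `ℳ_∞(B)`: a nonzero continuous `ℂ`-algebra
homomorphism `ℋ^∞(B) → ℂ`, encoded as a map on representatives. -/
structure MInfHom where
  toFun : (ℓ2 → ℂ) → ℂ
  map_add : ∀ f g, MemHinf f → MemHinf g → toFun (f + g) = toFun f + toFun g
  map_mul : ∀ f g, MemHinf f → MemHinf g → toFun (f * g) = toFun f * toFun g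
  map_smul : ∀ (c : ℂ) (f), MemHinf f → toFun (c • f) = c * toFun f
  respects : ∀ f g, MemHinf f → MemHinf g → Set.EqOn f g oB → toFun f = toFun g
  nonzero : ∃ f, MemHinf f ∧ toFun f ≠ 0
  cont : ∃ C, ∀ f, MemHinf f → ‖toFun f‖ ≤ C * supNorm f

/-- `ξ(Φ) = g`: the projection of `Φ` is the function `g`, i.e. `Φ(⟨·,eₙ⟩)(x) = g(x)ₙ`. -/
def xiEq (Φ : MuInfHom) (g : ℓ2 → ℓ2) : Prop :=
  ∀ x ∈ oB, ∀ n : ℕ, Φ.toFun (coord n) x = g x n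

/-- `Φ = C_g`: `Φ` is the composition homomorphism `f ↦ f̃ ∘ g`. -/
def IsCompHom (Φ : MuInfHom) (g : ℓ2 → ℓ2) : Prop :=
  ∀ f fext, MemAu f → IsExt f fext → ∀ x ∈ oB, Φ.toFun f x = fext (g x)

/-- The open unit ball of `ℋ^∞(B,ℓ2)`. -/
def ballHV : Set (ℓ2 → ℓ2) := {h | MemHinfV h ∧ supNormV h < 1}

/-- The open unit ball of `ℋ^∞(B)`. -/
def ballH : Set (ℓ2 → ℂ) := {h | MemHinf h ∧ supNorm h < 1}

/-- `F` is holomorphic on the open unit ball of `ℋ^∞(B,ℓ2)`: it is locally bounded there and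
`ℂ`-differentiable along every complex line (which, for maps on a ball of a Banach space, is
equivalent to Fréchet holomorphy). -/
def HolomorphicOnBallHV (F : (ℓ2 → ℓ2) → ℂ) : Prop :=
  (∀ h ∈ ballHV, ∃ ε > 0, ∃ C, ∀ k ∈ ballHV, supNormV (k - h) < ε → ‖F k‖ ≤ C) ∧
  (∀ h ∈ ballHV, ∀ k, MemHinfV k →
    DifferentiableOn ℂ (fun z : ℂ => F (h + z • k)) {z : ℂ | (h + z • k) ∈ ballHV})

/-- `F` is holomorphic on the open unit ball of `ℋ^∞(B)`: it is locally bounded there and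
`ℂ`-differentiable along every complex line. -/
def HolomorphicOnBallH (F : (ℓ2 → ℂ) → ℂ) : Prop :=
  (∀ h ∈ ballH, ∃ ε > 0, ∃ C, ∀ k ∈ ballH, supNorm (k - h) < ε → ‖F k‖ ≤ C) ∧
  (∀ h ∈ ballH, ∀ k, MemHinf k →
    DifferentiableOn ℂ (fun z : ℂ => F (h + z • k)) {z : ℂ | (h + z • k) ∈ ballH})

/-- `h ∈ 𝒞ℓ(f,g)` (with `fext = f̃` the continuous extension of `f` to the closed ball):
there is a net `(g_α)` in the open unit ball of `ℋ^∞(B,ℓ2)` converging weak-star to `g`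
(pointwise weak convergence of values) with `f̃(g_α(y)) → h(y)` for every `y ∈ B`. -/
def InCluster (fext : ℓ2 → ℂ) (g : ℓ2 → ℓ2) (h : ℓ2 → ℂ) : Prop :=
  ∃ (ι : Type) (l : Filter ι), l.NeBot ∧ ∃ gA : ι → ℓ2 → ℓ2,
    (∀ i, gA i ∈ ballHV) ∧
    (∀ y ∈ oB, ∀ u : ℓ2,
      Filter.Tendsto (fun i => (inner ℂ (gA i y) u : ℂ)) l (nhds (inner ℂ (g y) u))) ∧
    (∀ y ∈ oB, Filter.Tendsto (fun i => fext (gA i y)) l (nhds (h y)))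


instance : Nontrivial ℓ2 := by
  refine ⟨lp.single 2 0 1, 0, fun h => ?_⟩
  have h0 := congrArg (fun f : ℓ2 => (f : ∀ n : ℕ, ℂ) 0) h
  simp only [lp.coeFn_zero] at h0
  rw [lp.single_apply_self] at h0
  simp at h0

lemma zero_mem_oB : (0 : ℓ2) ∈ oB := by simp [oB]
instance : Nonempty oB := ⟨⟨0, zero_mem_oB⟩⟩

lemma mem_oB {y : ℓ2} : y ∈ oB ↔ ‖y‖ < 1 := mem_ball_zero_iff

lemma supNorm_le {g : ℓ2 → ℂ} {K : ℝ} (hK : 0 ≤ K) (h : ∀ y ∈ oB, ‖g y‖ ≤ K) :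
    supNorm g ≤ K := Real.iSup_le (fun ⟨y, hy⟩ => h y hy) hK

lemma supNorm_nonneg (g : ℓ2 → ℂ) : 0 ≤ supNorm g :=
  Real.iSup_nonneg (fun _ => norm_nonneg _)

-- coordinate functional as a CLM
def coordCLM (n : ℕ) : ℓ2 →L[ℂ] ℂ :=
  LinearMap.mkContinuous
    { toFun := fun y => y n
      map_add' := fun y z => by
        have := lp.coeFn_add y z; exact congrFun this n
      map_smul' := fun c y => by
        have := lp.coeFn_smul c y; simpa using congrFun this n }
    1 (fun y => by
      show ‖y n‖ ≤ 1 * ‖y‖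
      simpa using lp.norm_apply_le_norm (by norm_num) y n)

lemma coordCLM_apply (n : ℕ) (y : ℓ2) : coordCLM n y = y n := rfl

lemma uc_ucOn {α β : Type*} [UniformSpace α] [UniformSpace β] {f : α → β}
    (h : UniformContinuous f) (s : Set α) : UniformContinuousOn f s :=
  Filter.Tendsto.mono_left h inf_le_left

lemma memAu_clm (T : ℓ2 →L[ℂ] ℂ) : MemAu (fun y => T y) :=
  ⟨T.differentiable.differentiableOn, uc_ucOn T.uniformContinuous oB⟩

lemma memAu_coord (n : ℕ) : MemAu (coord n) := memAu_clm (coordCLM n)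

lemma memAu_add {f g : ℓ2 → ℂ} (hf : MemAu f) (hg : MemAu g) : MemAu (f + g) := by
  obtain ⟨hfd, hfu⟩ := hf; obtain ⟨hgd, hgu⟩ := hg
  rw [Metric.uniformContinuousOn_iff] at hfu hgu
  refine ⟨hfd.add hgd, Metric.uniformContinuousOn_iff.2 ?_⟩
  intro ε hε
  obtain ⟨δ₁, hδ₁, H₁⟩ := hfu (ε/2) (by linarith)
  obtain ⟨δ₂, hδ₂, H₂⟩ := hgu (ε/2) (by linarith)
  refine ⟨min δ₁ δ₂, lt_min hδ₁ hδ₂, fun y hy z hz hd => ?_⟩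
  have h1 := H₁ y hy z hz (hd.trans_le (min_le_left _ _))
  have h2 := H₂ y hy z hz (hd.trans_le (min_le_right _ _))
  calc dist ((f+g) y) ((f+g) z) ≤ dist (f y) (f z) + dist (g y) (g z) := dist_add_add_le _ _ _ _
  _ < ε := by linarith

lemma memAu_neg {f : ℓ2 → ℂ} (hf : MemAu f) : MemAu (-f) := by
  obtain ⟨hfd, hfu⟩ := hf
  rw [Metric.uniformContinuousOn_iff] at hfu
  refine ⟨hfd.neg, Metric.uniformContinuousOn_iff.2 ?_⟩
  intro ε hε
  obtain ⟨δ, hδ, H⟩ := hfu ε hε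
  exact ⟨δ, hδ, fun y hy z hz hd => by
    simpa [dist_neg_neg] using H y hy z hz hd⟩

lemma memAu_sub {f g : ℓ2 → ℂ} (hf : MemAu f) (hg : MemAu g) : MemAu (f - g) := by
  have := memAu_add hf (memAu_neg hg)
  simpa [sub_eq_add_neg] using this

lemma memAu_smul (c : ℂ) {f : ℓ2 → ℂ} (hf : MemAu f) : MemAu (c • f) := by
  obtain ⟨hfd, hfu⟩ := hf
  rw [Metric.uniformContinuousOn_iff] at hfu
  refine ⟨hfd.const_smul c, Metric.uniformContinuousOn_iff.2 ?_⟩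
  intro ε hε
  rcases eq_or_ne c 0 with rfl | hc
  · exact ⟨1, one_pos, fun y hy z hz hd => by simpa using hε⟩
  · have hc' : 0 < ‖c‖ := norm_pos_iff.2 hc
    obtain ⟨δ, hδ, H⟩ := hfu (ε/‖c‖) (by positivity)
    refine ⟨δ, hδ, fun y hy z hz hd => ?_⟩
    have hlt := H y hy z hz hd
    rw [dist_eq_norm] at hlt ⊢
    have hee : (c • f) y - (c • f) z = c • (f y - f z) := by
      simp [smul_sub, mul_sub]
    rw [hee, norm_smul]
    calc ‖c‖ * ‖f y - f z‖ < ‖c‖ * (ε/‖c‖) := (mul_lt_mul_iff_right₀ hc').2 hlt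
    _ = ε := mul_div_cancel₀ ε (ne_of_gt hc')

/-- uniformly continuous on the ball implies bounded. -/
lemma memAu_bound {f : ℓ2 → ℂ} (hf : MemAu f) : ∃ M, 0 ≤ M ∧ ∀ y ∈ oB, ‖f y‖ ≤ M := by
  obtain ⟨hfd, hfu⟩ := hf
  rw [Metric.uniformContinuousOn_iff] at hfu
  obtain ⟨δ, hδ, H⟩ := hfu 1 one_pos
  obtain ⟨N, hN⟩ := exists_nat_one_div_lt hδ
  refine ⟨‖f 0‖ + (N+1), by positivity, fun y hy => ?_⟩
  have hy1 : ‖y‖ < 1 := mem_oB.1 hy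
  have hmem : ∀ j : ℕ, j ≤ N + 1 → (((j : ℝ)/(N+1)) • y) ∈ oB := by
    intro j hj
    rw [mem_oB, norm_smul]
    have h1 : ‖((j : ℝ)/(N+1) : ℝ)‖ ≤ 1 := by
      rw [Real.norm_eq_abs, abs_div]
      rw [div_le_one (by positivity)]
      rw [abs_of_nonneg (by positivity : (0:ℝ) ≤ (j:ℝ)),
        abs_of_nonneg (by positivity : (0:ℝ) ≤ ((N:ℝ)+1))]
      exact_mod_cast hj
    calc ‖((j : ℝ)/(N+1) : ℝ)‖ * ‖y‖ ≤ 1 * ‖y‖ :=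
          mul_le_mul_of_nonneg_right h1 (norm_nonneg _)
    _ < 1 := by simpa
  have key : ∀ k : ℕ, k ≤ N + 1 → ‖f (((k : ℝ)/(N+1)) • y)‖ ≤ ‖f 0‖ + k := by
    intro k hk
    induction k with
    | zero => simp
    | succ m ih =>
      have hm : m ≤ N + 1 := by omega
      have ihm := ih hm
      have hd : dist ((((m+1 : ℕ) : ℝ)/(N+1)) • y) (((m : ℝ)/(N+1)) • y) < δ := by
        rw [dist_eq_norm, ← sub_smul]
        have he : (((m+1 : ℕ) : ℝ)/(N+1)) - ((m : ℝ)/(N+1)) = 1/(N+1) := by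
          push_cast; ring
        rw [he, norm_smul]
        calc ‖(1/((N:ℝ)+1))‖ * ‖y‖ ≤ (1/((N:ℝ)+1)) * 1 := by
              rw [Real.norm_eq_abs, abs_of_nonneg (by positivity)]
              exact mul_le_mul_of_nonneg_left hy1.le (by positivity)
        _ = 1/((N:ℝ)+1) := mul_one _
        _ < δ := hN
      have hstep := H _ (hmem (m+1) hk) _ (hmem m hm) hd
      rw [dist_eq_norm] at hstep
      have htri := norm_sub_norm_le (f ((((m+1:ℕ) : ℝ)/(N+1)) • y)) (f (((m : ℝ)/(N+1)) • y))
      have : ‖f ((((m+1:ℕ) : ℝ)/(N+1)) • y)‖ ≤ ‖f (((m : ℝ)/(N+1)) • y)‖ + 1 := by linarith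
      calc ‖f ((((m+1:ℕ) : ℝ)/(N+1)) • y)‖ ≤ ‖f 0‖ + m + 1 := by linarith
      _ = ‖f 0‖ + ((m+1 : ℕ) : ℝ) := by push_cast; ring
  have hfin := key (N+1) le_rfl
  have hNN : ((((N+1 : ℕ)) : ℝ)/(N+1)) • y = y := by
    have h1 : (((N+1 : ℕ) : ℝ)/((N:ℝ)+1)) = 1 := by push_cast; field_simp
    rw [h1, one_smul]
  rw [hNN] at hfin
  exact hfin.trans (by push_cast; linarith)

lemma memAu_mul {f g : ℓ2 → ℂ} (hf : MemAu f) (hg : MemAu g) : MemAu (f * g) := by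
  obtain ⟨Mf, hMf0, hMf⟩ := memAu_bound hf
  obtain ⟨Mg, hMg0, hMg⟩ := memAu_bound hg
  obtain ⟨hfd, hfu⟩ := hf; obtain ⟨hgd, hgu⟩ := hg
  rw [Metric.uniformContinuousOn_iff] at hfu hgu
  refine ⟨hfd.mul hgd, Metric.uniformContinuousOn_iff.2 ?_⟩
  intro ε hε
  obtain ⟨δ₁, hδ₁, H₁⟩ := hfu (ε/(2*(Mg+1))) (by positivity)
  obtain ⟨δ₂, hδ₂, H₂⟩ := hgu (ε/(2*(Mf+1))) (by positivity)
  refine ⟨min δ₁ δ₂, lt_min hδ₁ hδ₂, fun y hy z hz hd => ?_⟩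
  have h1 := H₁ y hy z hz (hd.trans_le (min_le_left _ _))
  have h2 := H₂ y hy z hz (hd.trans_le (min_le_right _ _))
  rw [dist_eq_norm] at h1 h2 ⊢
  have hsplit : (f*g) y - (f*g) z = f y * (g y - g z) + (f y - f z) * g z := by
    simp only [Pi.mul_apply]; ring
  rw [hsplit]
  calc ‖f y * (g y - g z) + (f y - f z) * g z‖
      ≤ ‖f y * (g y - g z)‖ + ‖(f y - f z) * g z‖ := norm_add_le _ _
  _ = ‖f y‖ * ‖g y - g z‖ + ‖f y - f z‖ * ‖g z‖ := by rw [norm_mul, norm_mul]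
  _ ≤ Mf * (ε/(2*(Mf+1))) + (ε/(2*(Mg+1))) * Mg := by
      gcongr
      · exact hMf y hy
      · exact hMg z hz
  _ < ε := by
      have e1 : Mf * (ε/(2*(Mf+1))) < ε/2 := by
        have h1 : Mf/(Mf+1) < 1 := by rw [div_lt_one (by positivity)]; linarith
        have h2 : Mf * (ε/(2*(Mf+1))) = (ε/2) * (Mf/(Mf+1)) := by field_simp; try ring
        rw [h2]
        calc (ε/2) * (Mf/(Mf+1)) < (ε/2) * 1 := by
              exact (mul_lt_mul_iff_right₀ (by linarith)).2 h1
        _ = ε/2 := mul_one _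
      have e2 : (ε/(2*(Mg+1))) * Mg < ε/2 := by
        have h1 : Mg/(Mg+1) < 1 := by rw [div_lt_one (by positivity)]; linarith
        have h2 : (ε/(2*(Mg+1))) * Mg = (ε/2) * (Mg/(Mg+1)) := by field_simp; try ring
        rw [h2]
        calc (ε/2) * (Mg/(Mg+1)) < (ε/2) * 1 := by
              exact (mul_lt_mul_iff_right₀ (by linarith)).2 h1
        _ = ε/2 := mul_one _
      linarith

section Wfun
variable (x : ℓ2)

def Lf : ℓ2 → ℂ := fun y => innerSL ℂ x y
def Wf : ℓ2 → ℂ := fun y => (1 - Lf x y)⁻¹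

lemma Lf_bound {x : ℓ2} (hx : ‖x‖ < 1) {y : ℓ2} (hy : y ∈ oB) : ‖Lf x y‖ ≤ ‖x‖ := by
  have h1 : ‖y‖ ≤ 1 := (mem_oB.1 hy).le
  calc ‖Lf x y‖ = ‖(inner ℂ x y : ℂ)‖ := rfl
  _ ≤ ‖x‖ * ‖y‖ := norm_inner_le_norm x y
  _ ≤ ‖x‖ * 1 := mul_le_mul_of_nonneg_left h1 (norm_nonneg _)
  _ = ‖x‖ := mul_one _

lemma den_lb {x : ℓ2} (hx : ‖x‖ < 1) {y : ℓ2} (hy : y ∈ oB) :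
    1 - ‖x‖ ≤ ‖1 - Lf x y‖ := by
  have := Lf_bound hx hy
  have h := norm_sub_norm_le (1 : ℂ) (Lf x y)
  simp only [norm_one] at h
  linarith

lemma den_ne {x : ℓ2} (hx : ‖x‖ < 1) {y : ℓ2} (hy : y ∈ oB) : 1 - Lf x y ≠ 0 := by
  intro h
  have := den_lb hx hy
  rw [h, norm_zero] at this
  linarith

lemma Wf_bound {x : ℓ2} (hx : ‖x‖ < 1) {y : ℓ2} (hy : y ∈ oB) :
    ‖Wf x y‖ ≤ (1 - ‖x‖)⁻¹ := by
  rw [Wf, norm_inv]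
  exact inv_anti₀ (by linarith) (den_lb hx hy)

lemma memAu_Lf : MemAu (Lf x) := memAu_clm (innerSL ℂ x)

lemma memAu_Wf {x : ℓ2} (hx : ‖x‖ < 1) : MemAu (Wf x) := by
  have hr1 : (0:ℝ) < 1 - ‖x‖ := by linarith
  constructor
  · exact DifferentiableOn.inv
      ((differentiableOn_const 1).sub (memAu_Lf x).1) (fun y hy => den_ne hx hy)
  · rw [Metric.uniformContinuousOn_iff]
    intro ε hε
    set δ : ℝ := ε * (1 - ‖x‖)^2 / (‖x‖ + 1) with hδdef
    have hδpos : 0 < δ := div_pos (mul_pos hε (pow_pos hr1 2)) (by positivity)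
    refine ⟨δ, hδpos, fun y hy z hz hd => ?_⟩
    have h1 : Wf x y - Wf x z = (Lf x y - Lf x z) * (Wf x y * Wf x z) := by
      rw [Wf, Wf]
      field_simp [den_ne hx hy, den_ne hx hz]
      try ring
    rw [dist_eq_norm, h1, norm_mul, norm_mul]
    have h2 : ‖Lf x y - Lf x z‖ ≤ ‖x‖ * ‖y - z‖ := by
      have he : Lf x y - Lf x z = (inner ℂ x (y - z) : ℂ) := by
        rw [inner_sub_right]; rfl
      rw [he]
      exact norm_inner_le_norm x (y - z)
    have h3 : ‖Wf x y‖ ≤ (1 - ‖x‖)⁻¹ := Wf_bound hx hy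
    have h4 : ‖Wf x z‖ ≤ (1 - ‖x‖)⁻¹ := Wf_bound hx hz
    rw [dist_eq_norm] at hd
    have hx1 : ‖x‖ < ‖x‖ + 1 := by linarith
    calc ‖Lf x y - Lf x z‖ * (‖Wf x y‖ * ‖Wf x z‖)
        ≤ (‖x‖ * ‖y - z‖) * ((1 - ‖x‖)⁻¹ * (1 - ‖x‖)⁻¹) := by
          gcongr
    _ ≤ (‖x‖ * δ) * ((1 - ‖x‖)⁻¹ * (1 - ‖x‖)⁻¹) := by
          gcongr
    _ < ((‖x‖ + 1) * δ) * ((1 - ‖x‖)⁻¹ * (1 - ‖x‖)⁻¹) := by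
          apply mul_lt_mul_of_pos_right
          · exact mul_lt_mul_of_pos_right hx1 hδpos
          · positivity
    _ = ε := by
          rw [hδdef]
          field_simp
end Wfun

lemma memAu_zero : MemAu (0 : ℓ2 → ℂ) :=
  ⟨differentiableOn_const 0, uc_ucOn uniformContinuous_const oB⟩

section Psi
variable (Φ : MuInfHom) {x : ℓ2} (hx : x ∈ oB)

include hx

lemma psi_zero : Φ.toFun 0 x = 0 := by
  have h := Φ.map_add 0 0 memAu_zero memAu_zero x hx
  rw [add_zero] at h
  exact add_eq_left.mp h.symm

lemma psi_sub {f g : ℓ2 → ℂ} (hf : MemAu f) (hg : MemAu g) :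
    Φ.toFun (f - g) x = Φ.toFun f x - Φ.toFun g x := by
  have h := Φ.map_add (f - g) g (memAu_sub hf hg) hg x hx
  rw [sub_add_cancel] at h
  linear_combination -h

lemma psi_sum (s : Finset ℕ) (g : ℕ → ℓ2 → ℂ) (hg : ∀ n ∈ s, MemAu (g n)) :
    MemAu (∑ n ∈ s, g n) ∧ Φ.toFun (∑ n ∈ s, g n) x = ∑ n ∈ s, Φ.toFun (g n) x := by
  classical
  induction s using Finset.induction_on with
  | empty =>
    refine ⟨by simpa using memAu_zero, ?_⟩
    simpa using psi_zero Φ hx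
  | @insert a s ha ih =>
    have hga : MemAu (g a) := hg a (Finset.mem_insert_self a s)
    have hgs : ∀ n ∈ s, MemAu (g n) := fun n hn => hg n (Finset.mem_insert_of_mem hn)
    obtain ⟨ihm, ihv⟩ := ih hgs
    have hsum : (∑ n ∈ insert a s, g n) = g a + ∑ n ∈ s, g n := Finset.sum_insert ha
    constructor
    · rw [hsum]; exact memAu_add hga ihm
    · rw [hsum, Φ.map_add _ _ hga ihm x hx, ihv, Finset.sum_insert ha]

end Psi

lemma psi_Lf (Φ : MuInfHom) (hΦ : xiEq Φ (fun x => x)) {C : ℝ} (hC0 : 0 ≤ C)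
    (hC : ∀ f, MemAu f → ∀ x ∈ oB, ‖Φ.toFun f x‖ ≤ C * supNorm f)
    {x : ℓ2} (hx : x ∈ oB) : Φ.toFun (Lf x) x = (inner ℂ x x : ℂ) := by
  classical
  set xN : ℕ → ℓ2 := fun N => ∑ n ∈ Finset.range N, lp.single 2 n (x n) with hxN
  have hSN_eq : ∀ N : ℕ, Lf (xN N) = ∑ n ∈ Finset.range N,
      ((starRingEnd ℂ) (x n) • coord n) := by
    intro N
    funext y
    rw [Lf]
    show (inner ℂ (xN N) y : ℂ) = _
    rw [hxN]
    rw [sum_inner]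
    rw [Finset.sum_apply]
    refine Finset.sum_congr rfl (fun n _ => ?_)
    rw [lp.inner_single_left]
    simp [coord, RCLike.inner_apply, mul_comm]
  have hpsiSN : ∀ N : ℕ, Φ.toFun (Lf (xN N)) x
      = ∑ n ∈ Finset.range N, (starRingEnd ℂ) (x n) * x n := by
    intro N
    rw [hSN_eq N]
    have hmem : ∀ n ∈ Finset.range N, MemAu ((starRingEnd ℂ) (x n) • coord n) :=
      fun n _ => memAu_smul _ (memAu_coord n)
    rw [(psi_sum Φ hx _ _ hmem).2]
    refine Finset.sum_congr rfl (fun n _ => ?_)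
    rw [Φ.map_smul _ _ (memAu_coord n) x hx, hΦ x hx n]
  have hdiff : ∀ N : ℕ, ‖Φ.toFun (Lf x) x - Φ.toFun (Lf (xN N)) x‖ ≤ C * ‖x - xN N‖ := by
    intro N
    rw [← psi_sub Φ hx (memAu_Lf x) (memAu_Lf (xN N))]
    have heq : Lf x - Lf (xN N) = Lf (x - xN N) := by
      funext y
      show (inner ℂ x y : ℂ) - inner ℂ (xN N) y = inner ℂ (x - xN N) y
      rw [inner_sub_left]
    rw [heq]
    refine (hC _ (memAu_Lf _) x hx).trans ?_
    refine mul_le_mul_of_nonneg_left ?_ hC0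
    refine supNorm_le (norm_nonneg _) (fun y hy => ?_)
    calc ‖Lf (x - xN N) y‖ = ‖(inner ℂ (x - xN N) y : ℂ)‖ := rfl
    _ ≤ ‖x - xN N‖ * ‖y‖ := norm_inner_le_norm _ _
    _ ≤ ‖x - xN N‖ * 1 := by
        exact mul_le_mul_of_nonneg_left (mem_oB.1 hy).le (norm_nonneg _)
    _ = ‖x - xN N‖ := mul_one _
  -- limits
  have hxNlim : Tendsto xN atTop (nhds x) :=
    (lp.hasSum_single ENNReal.ofNat_ne_top x).tendsto_sum_nat
  have hnorm0 : Tendsto (fun N => ‖x - xN N‖) atTop (nhds 0) := by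
    have h : Tendsto (fun N : ℕ => x - xN N) atTop (nhds (x - x)) :=
      hxNlim.const_sub x
    rw [sub_self] at h
    simpa using h.norm
  have hslim : Tendsto (fun N => ∑ n ∈ Finset.range N, (starRingEnd ℂ) (x n) * x n)
      atTop (nhds (inner ℂ x x : ℂ)) := by
    have h := (lp.hasSum_inner (𝕜 := ℂ) x x).tendsto_sum_nat
    simpa [RCLike.inner_apply, Complex.conj_mul'] using h
  have hto : Tendsto (fun N => Φ.toFun (Lf (xN N)) x) atTop (nhds (Φ.toFun (Lf x) x)) := by
    rw [tendsto_iff_norm_sub_tendsto_zero]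
    have hCn : Tendsto (fun N => C * ‖x - xN N‖) atTop (nhds 0) := by
      simpa using hnorm0.const_mul C
    refine squeeze_zero (fun N => norm_nonneg _) (fun N => ?_) hCn
    rw [norm_sub_rev]
    exact hdiff N
  have : Tendsto (fun N => Φ.toFun (Lf (xN N)) x) atTop (nhds (inner ℂ x x : ℂ)) := by
    simp only [hpsiSN]
    exact hslim
  exact tendsto_nhds_unique hto this

lemma psi_Wf (Φ : MuInfHom) (hΦ : xiEq Φ (fun x => x)) {C : ℝ} (hC0 : 0 ≤ C)
    (hC : ∀ f, MemAu f → ∀ x ∈ oB, ‖Φ.toFun f x‖ ≤ C * supNorm f)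
    {x : ℓ2} (hx : x ∈ oB) (hx0 : x ≠ 0) :
    Φ.toFun (Wf x) x * (1 - (inner ℂ x x : ℂ)) = 1 := by
  have hx1 : ‖x‖ < 1 := mem_oB.1 hx
  obtain ⟨n₀, hn₀⟩ : ∃ n, x n ≠ 0 := by
    by_contra h
    push_neg at h
    exact hx0 (lp.ext (funext h))
  have hw : MemAu (Wf x) := memAu_Wf hx1
  have hcw : MemAu (coord n₀ * Wf x) := memAu_mul (memAu_coord n₀) hw
  have hcwl : MemAu ((coord n₀ * Wf x) * Lf x) := memAu_mul hcw (memAu_Lf x)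
  set u : ℓ2 → ℂ := (coord n₀ * Wf x) - ((coord n₀ * Wf x) * Lf x) with hu
  have hmu : MemAu u := memAu_sub hcw hcwl
  have hEq : Set.EqOn u (coord n₀) oB := by
    intro y hy
    have h1 : (Wf x y) * (1 - Lf x y) = 1 := inv_mul_cancel₀ (den_ne hx1 hy)
    show (coord n₀ * Wf x) y - ((coord n₀ * Wf x) * Lf x) y = coord n₀ y
    simp only [Pi.mul_apply]
    linear_combination (coord n₀ y) * h1
  have hψu : Φ.toFun u x = Φ.toFun (coord n₀) x := Φ.respects u (coord n₀) hmu (memAu_coord n₀) hEq hx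
  have hψc : Φ.toFun (coord n₀) x = x n₀ := hΦ x hx n₀
  have e1 : Φ.toFun u x = Φ.toFun (coord n₀ * Wf x) x - Φ.toFun ((coord n₀ * Wf x) * Lf x) x :=
    psi_sub Φ hx hcw hcwl
  have e2 : Φ.toFun (coord n₀ * Wf x) x = x n₀ * Φ.toFun (Wf x) x := by
    rw [Φ.map_mul _ _ (memAu_coord n₀) hw x hx, hψc]
  have e3 : Φ.toFun ((coord n₀ * Wf x) * Lf x) x
      = (x n₀ * Φ.toFun (Wf x) x) * (inner ℂ x x : ℂ) := by
    rw [Φ.map_mul _ _ hcw (memAu_Lf x) x hx, e2, psi_Lf Φ hΦ hC0 hC hx]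
  have : x n₀ * (Φ.toFun (Wf x) x * (1 - (inner ℂ x x : ℂ))) = x n₀ * 1 := by
    rw [mul_one]
    rw [hψu, hψc] at e1
    rw [e2, e3] at e1
    linear_combination -e1
  exact mul_left_cancel₀ hn₀ this

lemma key_est (Φ : MuInfHom) (hΦ : xiEq Φ (fun x => x)) {C : ℝ} (hC0 : 0 ≤ C)
    (hC : ∀ g, MemAu g → ∀ x ∈ oB, ‖Φ.toFun g x‖ ≤ C * supNorm g)
    {f : ℓ2 → ℂ} (hf : MemAu f) {M : ℝ} (hM0 : 0 ≤ M) (hM : ∀ y ∈ oB, ‖f y‖ ≤ M)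
    {ε δf : ℝ} (hε : 0 < ε) (hδf : 0 < δf)
    (huc : ∀ y ∈ oB, ∀ z ∈ oB, dist y z < δf → dist (f y) (f z) < ε)
    {x : ℓ2} (hx : x ∈ oB) (hx0 : x ≠ 0) :
    ‖Φ.toFun f x - f x‖ ≤ C * (2*ε + 16*M*(1 - ‖x‖)/δf^2) := by
  have hr1 : ‖x‖ < 1 := mem_oB.1 hx
  have hr0 : (0:ℝ) < 1 - ‖x‖ := by linarith
  set δ : ℝ := δf^2/4 with hδdef
  have hδpos : 0 < δ := by positivity
  have hw : MemAu (Wf x) := memAu_Wf hr1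
  have hfw : MemAu (f * Wf x) := memAu_mul hf hw
  have hsw : MemAu (f x • Wf x) := memAu_smul _ hw
  set h₀ : ℓ2 → ℂ := f * Wf x - f x • Wf x with hh₀
  have hmh₀ : MemAu h₀ := memAu_sub hfw hsw
  -- value of ψ h₀
  have hB := psi_Wf Φ hΦ hC0 hC hx hx0
  have e1 : Φ.toFun h₀ x = Φ.toFun f x * Φ.toFun (Wf x) x - f x * Φ.toFun (Wf x) x := by
    rw [hh₀, psi_sub Φ hx hfw hsw, Φ.map_mul _ _ hf hw x hx, Φ.map_smul _ _ hw x hx]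
  have e2 : Φ.toFun f x - f x = Φ.toFun h₀ x * (1 - (inner ℂ x x : ℂ)) := by
    rw [e1]
    linear_combination (f x - Φ.toFun f x) * hB
  -- pointwise bound on h₀
  have hptw : ∀ y ∈ oB, ‖h₀ y‖ ≤ max (2*M/δ) (ε/(1 - ‖x‖)) := by
    intro y hy
    have hsplit : h₀ y = (f y - f x) * Wf x y := by
      simp only [hh₀, Pi.sub_apply, Pi.mul_apply, Pi.smul_apply, smul_eq_mul]
      ring
    rw [hsplit, norm_mul]
    by_cases hcase : δ ≤ ‖1 - Lf x y‖
    · refine le_max_of_le_left ?_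
      have h1 : ‖f y - f x‖ ≤ 2*M := by
        calc ‖f y - f x‖ ≤ ‖f y‖ + ‖f x‖ := norm_sub_le _ _
        _ ≤ M + M := add_le_add (hM y hy) (hM x hx)
        _ = 2*M := by ring
      have h2 : ‖Wf x y‖ ≤ δ⁻¹ := by
        rw [Wf, norm_inv]
        exact inv_anti₀ hδpos hcase
      calc ‖f y - f x‖ * ‖Wf x y‖ ≤ (2*M) * δ⁻¹ :=
            mul_le_mul h1 h2 (norm_nonneg _) (by positivity)
      _ = 2*M/δ := by rw [div_eq_mul_inv]
    · refine le_max_of_le_right ?_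
      push_neg at hcase
      -- y is close to x in norm
      have hre : 1 - δ < (Lf x y).re := by
        have h1 : (1 - Lf x y).re ≤ ‖1 - Lf x y‖ := Complex.re_le_norm _
        have h2 : (1 - Lf x y).re = 1 - (Lf x y).re := by simp
        linarith
      have hyx : ‖y - x‖ < δf := by
        have hsq : ‖y - x‖^2 < δf^2 := by
          have hns := @norm_sub_sq ℂ _ _ _ _ y x
          have hre2 : RCLike.re (inner ℂ y x : ℂ) = (Lf x y).re := by
            rw [inner_re_symm]
            rfl
          rw [hre2] at hns
          have hy2 : ‖y‖^2 ≤ 1 := by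
            have := (mem_oB.1 hy).le
            nlinarith [norm_nonneg y]
          have hx2 : ‖x‖^2 ≤ 1 := by nlinarith [norm_nonneg x]
          have : ‖y - x‖^2 < 2*δ := by rw [hns]; nlinarith
          rw [hδdef] at this
          nlinarith
        exact lt_of_pow_lt_pow_left₀ 2 hδf.le hsq
      have hfyx : ‖f y - f x‖ < ε := by
        have := huc y hy x hx (by rwa [dist_eq_norm])
        rwa [dist_eq_norm] at this
      have h2 : ‖Wf x y‖ ≤ (1 - ‖x‖)⁻¹ := Wf_bound hr1 hy
      calc ‖f y - f x‖ * ‖Wf x y‖ ≤ ε * (1 - ‖x‖)⁻¹ :=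
            mul_le_mul hfyx.le h2 (norm_nonneg _) hε.le
      _ = ε/(1 - ‖x‖) := by rw [div_eq_mul_inv]
  -- assemble
  have hmax0 : (0:ℝ) ≤ max (2*M/δ) (ε/(1 - ‖x‖)) :=
    le_max_of_le_left (by positivity)
  have hS : supNorm h₀ ≤ max (2*M/δ) (ε/(1 - ‖x‖)) := supNorm_le hmax0 hptw
  have hψh₀ : ‖Φ.toFun h₀ x‖ ≤ C * max (2*M/δ) (ε/(1 - ‖x‖)) :=
    (hC _ hmh₀ x hx).trans (mul_le_mul_of_nonneg_left hS hC0)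
  have hnorm1r : ‖(1 - (inner ℂ x x : ℂ))‖ = 1 - ‖x‖^2 := by
    have h1 : (inner ℂ x x : ℂ) = ((‖x‖^2 : ℝ) : ℂ) := by
      rw [inner_self_eq_norm_sq_to_K]; norm_cast
    have h2 : (1 : ℂ) - (inner ℂ x x : ℂ) = ((1 - ‖x‖^2 : ℝ) : ℂ) := by
      rw [h1]; push_cast; ring
    rw [h2, Complex.norm_real, Real.norm_eq_abs,
      abs_of_nonneg (by nlinarith [hr1, norm_nonneg x] : (0:ℝ) ≤ 1 - ‖x‖^2)]
  rw [e2, norm_mul, hnorm1r]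
  have hfac : 1 - ‖x‖^2 = (1 - ‖x‖) * (1 + ‖x‖) := by ring
  have hle2 : 1 + ‖x‖ ≤ 2 := by linarith
  calc ‖Φ.toFun h₀ x‖ * (1 - ‖x‖^2)
      ≤ (C * max (2*M/δ) (ε/(1 - ‖x‖))) * (1 - ‖x‖^2) := by
        apply mul_le_mul_of_nonneg_right hψh₀ (by nlinarith [hr1, norm_nonneg x])
  _ ≤ C * ((2*M/δ) * (1 - ‖x‖^2) + (ε/(1 - ‖x‖)) * (1 - ‖x‖^2)) := by
        rw [mul_assoc]
        apply mul_le_mul_of_nonneg_left ?_ hC0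
        have h1 : max (2*M/δ) (ε/(1 - ‖x‖)) * (1 - ‖x‖^2)
            ≤ ((2*M/δ) + (ε/(1 - ‖x‖))) * (1 - ‖x‖^2) := by
          apply mul_le_mul_of_nonneg_right ?_ (by nlinarith [hr1, norm_nonneg x])
          exact max_le (le_add_of_nonneg_right (by positivity))
            (le_add_of_nonneg_left (by positivity))
        calc max (2*M/δ) (ε/(1 - ‖x‖)) * (1 - ‖x‖^2)
            ≤ ((2*M/δ) + (ε/(1 - ‖x‖))) * (1 - ‖x‖^2) := h1
        _ = (2*M/δ) * (1 - ‖x‖^2) + (ε/(1 - ‖x‖)) * (1 - ‖x‖^2) := by ring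
  _ ≤ C * (2*ε + 16*M*(1 - ‖x‖)/δf^2) := by
        apply mul_le_mul_of_nonneg_left ?_ hC0
        have t1 : (2*M/δ) * (1 - ‖x‖^2) ≤ 16*M*(1 - ‖x‖)/δf^2 := by
          rw [hδdef]
          rw [hfac]
          have : 2*M/(δf^2/4) * ((1 - ‖x‖) * (1 + ‖x‖)) = (8*M*(1-‖x‖)/δf^2) * (1 + ‖x‖) := by
            field_simp
            ring
          rw [this]
          have h8 : (0:ℝ) ≤ 8*M*(1-‖x‖)/δf^2 := by positivity
          calc (8*M*(1-‖x‖)/δf^2) * (1 + ‖x‖) ≤ (8*M*(1-‖x‖)/δf^2) * 2 :=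
                mul_le_mul_of_nonneg_left hle2 h8
          _ = 16*M*(1 - ‖x‖)/δf^2 := by ring
        have t2 : (ε/(1 - ‖x‖)) * (1 - ‖x‖^2) ≤ 2*ε := by
          rw [hfac]
          have : (ε/(1 - ‖x‖)) * ((1 - ‖x‖) * (1 + ‖x‖)) = ε * (1 + ‖x‖) := by
            have hne : (1 - ‖x‖) ≠ 0 := ne_of_gt hr0
            field_simp
            try ring
          rw [this]
          calc ε * (1 + ‖x‖) ≤ ε * 2 := mul_le_mul_of_nonneg_left hle2 hε.le
          _ = 2*ε := by ring
        linarith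


/-- the fiber over the identity consists only of the identity composition
homomorphism: `ξ(Φ) = id` implies `Φ(f) = f` for every `f ∈ 𝒜ᵤ(B)`. -/
theorem stmt3 (Φ : MuInfHom) (hΦ : xiEq Φ (fun x => x)) :
    ∀ f, MemAu f → ∀ x ∈ oB, Φ.toFun f x = f x := by
  intro f hf x₀ hx₀
  obtain ⟨C₀, hC₀⟩ := Φ.cont
  set C := |C₀| with hCdef
  have hC0 : 0 ≤ C := abs_nonneg _
  have hC : ∀ g, MemAu g → ∀ x ∈ oB, ‖Φ.toFun g x‖ ≤ C * supNorm g := fun g hg x hx =>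
    (hC₀ g hg x hx).trans (mul_le_mul_of_nonneg_right (le_abs_self C₀) (supNorm_nonneg g))
  obtain ⟨M, hM0, hM⟩ := memAu_bound hf
  set D : ℓ2 → ℂ := fun y => Φ.toFun f y - f y with hDdef
  have hDdiff : DifferentiableOn ℂ D oB := ((Φ.maps_mem f hf).1).sub hf.1
  suffices h : ∀ ε' > 0, ‖D x₀‖ ≤ ε' by
    have h0 : ‖D x₀‖ ≤ 0 := by
      by_contra hcon
      push_neg at hcon
      have := h (‖D x₀‖/2) (by linarith)
      linarith
    have hD0 : D x₀ = 0 := norm_le_zero_iff.1 h0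
    exact sub_eq_zero.1 hD0
  intro ε' hε'
  have hC1 : (0:ℝ) < C + 1 := by linarith
  set ε₁ := ε'/(4*(C+1)) with hε₁def
  have hε₁ : 0 < ε₁ := by positivity
  have huc := hf.2
  rw [Metric.uniformContinuousOn_iff] at huc
  obtain ⟨δf, hδf, Huc⟩ := huc ε₁ hε₁
  have hx₀n : ‖x₀‖ < 1 := mem_oB.1 hx₀
  set t := min ((1 - ‖x₀‖)/2) (ε' * δf^2 / (2*(16*M+1)*(C+1))) with htdef
  have ht0 : 0 < t := lt_min (by linarith) (by positivity)
  set ρ := 1 - t with hρdef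
  have hρ1 : ρ < 1 := by rw [hρdef]; linarith
  have hρx : ‖x₀‖ < ρ := by
    have h1 : t ≤ (1 - ‖x₀‖)/2 := min_le_left _ _
    rw [hρdef]; linarith
  have hρ0 : 0 < ρ := lt_of_le_of_lt (norm_nonneg x₀) hρx
  -- bound on the sphere of radius ρ
  have hsb : ∀ z ∈ frontier (ball (0:ℓ2) ρ), ‖D z‖ ≤ ε' := by
    intro z hz
    rw [frontier_ball (0:ℓ2) (ne_of_gt hρ0)] at hz
    have hzn : ‖z‖ = ρ := by simpa using mem_sphere_zero_iff_norm.1 hz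
    have hzoB : z ∈ oB := mem_oB.2 (by rw [hzn]; exact hρ1)
    have hz0 : z ≠ 0 := by
      intro h
      rw [h, norm_zero] at hzn
      linarith
    have hkey := key_est Φ hΦ hC0 hC hf hM0 hM hε₁ hδf
      (fun y hy z' hz' hd => Huc y hy z' hz' hd) hzoB hz0
    rw [hzn] at hkey
    have h1ρ : 1 - ρ = t := by rw [hρdef]; ring
    rw [h1ρ] at hkey
    refine hkey.trans ?_
    -- C * (2ε₁ + 16 M t / δf²) ≤ ε'
    have ht2 : t ≤ ε' * δf^2 / (2*(16*M+1)*(C+1)) := min_le_right _ _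
    have e1 : C * (2*ε₁) ≤ ε'/2 := by
      rw [hε₁def]
      have heq : C * (2*(ε'/(4*(C+1)))) = ε' * (C/(C+1)) / 2 := by
        field_simp
        ring
      rw [heq]
      have hq : C/(C+1) ≤ 1 := by rw [div_le_one hC1]; linarith
      calc ε' * (C/(C+1)) / 2 ≤ ε' * 1 / 2 := by gcongr
      _ = ε'/2 := by ring
    have e2 : C * (16*M*t/δf^2) ≤ ε'/2 := by
      have hM1 : (0:ℝ) < 16*M+1 := by linarith
      have step1 : C * (16*M*t/δf^2)
          ≤ C * (16*M*(ε' * δf^2 / (2*(16*M+1)*(C+1)))/δf^2) := by gcongr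
      refine step1.trans ?_
      have heq : C * (16*M*(ε' * δf^2 / (2*(16*M+1)*(C+1)))/δf^2)
          = ε' * ((16*M)/(16*M+1)) * (C/(C+1)) / 2 := by
        field_simp
      rw [heq]
      have hq1 : (16*M)/(16*M+1) ≤ 1 := by rw [div_le_one hM1]; linarith
      have hq2 : C/(C+1) ≤ 1 := by rw [div_le_one hC1]; linarith
      calc ε' * ((16*M)/(16*M+1)) * (C/(C+1)) / 2 ≤ ε' * 1 * 1 / 2 := by
            gcongr
      _ = ε'/2 := by ring
    have : C * (2*ε₁ + 16*M*t/δf^2) = C * (2*ε₁) + C * (16*M*t/δf^2) := by ring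
    rw [this]
    linarith
  -- maximum principle
  have hdc : DiffContOnCl ℂ D (ball (0:ℓ2) ρ) := by
    constructor
    · refine hDdiff.mono ?_
      intro y hy
      rw [mem_ball_zero_iff] at hy
      exact mem_oB.2 (hy.trans hρ1)
    · have hcl : closure (ball (0:ℓ2) ρ) = closedBall 0 ρ := closure_ball 0 (ne_of_gt hρ0)
      rw [hcl]
      refine (hDdiff.continuousOn).mono ?_
      intro y hy
      rw [mem_closedBall_zero_iff] at hy
      exact mem_oB.2 (lt_of_le_of_lt hy hρ1)
  have hx₀cl : x₀ ∈ closure (ball (0:ℓ2) ρ) := subset_closure (mem_ball_zero_iff.2 hρx)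
  exact Complex.norm_le_of_forall_mem_frontier_norm_le isBounded_ball hdc hsb hx₀cl
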